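/- If A and X are n×n complex matrices such that the spectral radius ρ(I − A*X) < 1, then A is invertible and the sequence X_{k+1} = X_k * ∑_{λ=0}^{r−1} (I − A*X_k)^λ (with X_0 = X, fixed r ≥ 2) converges to A⁻¹. -/

import Mathlib

/-!
The residual `Eₖ = 1 - A Xₖ` of the hyper-power iteration satisfies `Eₖ₊₁ = Eₖ ^ r` (a
geometric-sum identity), so `Eₖ = E₀ ^ (r ^ k)`. Gelfand's formula turns `ρ(E₀) < 1` into
`E₀ ^ m → 0`, hence `A Xₖ → 1` and `Xₖ → A⁻¹`. Invertibility is purely spectral: `ρ(E₀) < 1`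
keeps `1` out of the spectrum of `E₀ = 1 - A X`, so `A X` is a unit, and matrix rings are
Dedekind-finite.
-/

open Filter Topology

section HyperPower

variable {R : Type*} [Ring R]

theorem one_sub_mul_mul_geom_sum (a x : R) (r : ℕ) :
    1 - a * (x * ∑ l ∈ Finset.range r, (1 - a * x) ^ l) = (1 - a * x) ^ r :=
  calc 1 - a * (x * ∑ l ∈ Finset.range r, (1 - a * x) ^ l)
      = 1 - (1 - (1 - a * x)) * ∑ l ∈ Finset.range r, (1 - a * x) ^ l := by
        rw [sub_sub_cancel, mul_assoc]
    _ = (1 - a * x) ^ r := by rw [mul_neg_geom_sum, sub_sub_cancel]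

theorem one_sub_mul_eq_pow_of_hyperPower {a : R} {r : ℕ} {x : ℕ → R}
    (hx : ∀ k, x (k + 1) = x k * ∑ l ∈ Finset.range r, (1 - a * x k) ^ l) (k : ℕ) :
    1 - a * x k = (1 - a * x 0) ^ (r ^ k) := by
  induction k with
  | zero => rw [pow_zero, pow_one]
  | succ k ih => rw [hx, one_sub_mul_mul_geom_sum, ih, ← pow_mul, ← pow_succ]

end HyperPower

theorem isUnit_of_spectralRadius_one_sub_lt_one {𝕜 A : Type*} [NormedField 𝕜] [Ring A]
    [Algebra 𝕜 A] {a : A} (h : spectralRadius 𝕜 (1 - a) < 1) : IsUnit a := by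
  have h1 : (1 : 𝕜) ∈ resolventSet 𝕜 (1 - a) :=
    spectrum.mem_resolventSet_of_spectralRadius_lt (by simpa using h)
  simpa [resolventSet] using h1

theorem tendsto_pow_atTop_nhds_zero_of_spectralRadius_lt_one {𝔸 : Type*} [NormedRing 𝔸]
    [NormedAlgebra ℂ 𝔸] [CompleteSpace 𝔸] {a : 𝔸} (h : spectralRadius ℂ a < 1) :
    Tendsto (a ^ ·) atTop (𝓝 0) := by
  obtain ⟨c, hρc, hc1⟩ := ENNReal.lt_iff_exists_nnreal_btwn.mp h
  have hroot : ∀ᶠ m : ℕ in atTop, (‖a ^ m‖₊ : ENNReal) ^ (1 / (m : ℝ)) < c :=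
    (spectrum.pow_nnnorm_pow_one_div_tendsto_nhds_spectralRadius a).eventually_lt_const hρc
  refine squeeze_zero_norm' ?_ (tendsto_pow_atTop_nhds_zero_of_lt_one c.coe_nonneg
    (by exact_mod_cast hc1))
  filter_upwards [hroot, eventually_gt_atTop 0] with m hm hm0
  rw [one_div, ENNReal.rpow_inv_lt_iff (by positivity), ENNReal.rpow_natCast,
    ← ENNReal.coe_pow, ENNReal.coe_lt_coe] at hm
  exact_mod_cast hm.le

theorem Matrix.tendsto_pow_atTop_nhds_zero_of_spectralRadius_lt_one {n : Type*} [Fintype n]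
    [DecidableEq n] {E : Matrix n n ℂ} (h : spectralRadius ℂ E < 1) :
    Tendsto (E ^ ·) atTop (𝓝 0) := by
  open scoped Matrix.Norms.Operator in
  exact _root_.tendsto_pow_atTop_nhds_zero_of_spectralRadius_lt_one h

theorem tendsto_of_tendsto_mul_nhds_one {M ι : Type*} [Monoid M] [TopologicalSpace M]
    [ContinuousMul M] {a b : M} (hba : b * a = 1) {l : Filter ι} {x : ι → M}
    (h : Tendsto (fun k => a * x k) l (𝓝 1)) : Tendsto x l (𝓝 b) := by
  simpa [← mul_assoc, hba] using h.const_mul b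

/-- If `ρ(I − A X) < 1`, then `A` is invertible and the order-`r` hyper-power
iteration starting from `X` converges to `A⁻¹`. -/
theorem stmt10 {n : ℕ} (A X : Matrix (Fin n) (Fin n) ℂ)
    (hρ : spectralRadius ℂ (1 - A * X) < 1)
    (r : ℕ) (hr : 2 ≤ r)
    (Xseq : ℕ → Matrix (Fin n) (Fin n) ℂ) (hX0 : Xseq 0 = X)
    (hrec : ∀ k, Xseq (k + 1) =
      Xseq k * ∑ l ∈ Finset.range r, (1 - A * Xseq k) ^ l) :
    IsUnit A ∧ Tendsto Xseq atTop (nhds A⁻¹) := by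
  have hA : IsUnit A := isUnit_of_mul_isUnit_left (isUnit_of_spectralRadius_one_sub_lt_one hρ)
  refine ⟨hA, tendsto_of_tendsto_mul_nhds_one
    (A.nonsing_inv_mul (A.isUnit_iff_isUnit_det.mp hA)) ?_⟩
  have hres : Tendsto (fun k => (1 - A * X) ^ (r ^ k)) atTop (𝓝 0) :=
    (Matrix.tendsto_pow_atTop_nhds_zero_of_spectralRadius_lt_one hρ).comp
      (tendsto_pow_atTop_atTop_of_one_lt (by omega))
  simpa only [← hX0, ← one_sub_mul_eq_pow_of_hyperPower hrec, sub_sub_cancel, sub_zero]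
    using hres.const_sub 1
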